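/- arXiv:math-ph/0510066 — 2 statements merged into one kernel-verified Lean document; each statement's English description precedes it below -/
import Mathlib

section
/- Let A ∈ ℂ^{N×N} be tridiagonal with all superdiagonal and subdiagonal entries nonzero, and suppose that for every k ∈ {1,…,N} the principal submatrices A_{k−1} = [A_{ij}]_{1≤i,j≤k−1} and Ã_{k+1} = [A_{ij}]_{k+1≤i,j≤N} have disjoint spectra. Then every eigenvector of A has all entries nonzero. -/
/-!
If `x` is an eigenvector of a tridiagonal `A` with `x k = 0`, then row `i ≠ k` of `A x = λ x`
only involves entries of `x` on the same side of `k`, so the parts of `x` before and after `k`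
are eigenvectors of the leading and trailing blocks unless they vanish. Both cannot be
eigenvectors for the same `λ`, so one side vanishes together with `x k`; since the off-diagonal
entries are nonzero, the row equations then force the next entry to vanish, one at a time,
and `x = 0`.
-/

open Matrix

def Fin.trailing {N : ℕ} (k : Fin N) : Fin (N - k - 1) → Fin N :=
  fun i => ⟨k + 1 + i, by omega⟩

namespace Matrix

variable {R : Type*}

def IsTridiagonal [Zero R] {N : ℕ} (A : Matrix (Fin N) (Fin N) R) : Prop :=
  ∀ i j : Fin N, ((i : ℕ) + 1 < (j : ℕ) ∨ (j : ℕ) + 1 < (i : ℕ)) → A i j = 0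

theorem submatrix_mulVec_comp_of_injective [NonUnitalNonAssocSemiring R] {m n : Type*}
    [Fintype m] [Fintype n] (A : Matrix n n R) (x : n → R) {e : m → n} (he : e.Injective)
    (hout : ∀ i, ∀ j ∉ Set.range e, A (e i) j * x j = 0) :
    A.submatrix e e *ᵥ (x ∘ e) = (A *ᵥ x) ∘ e :=
  funext fun i => Fintype.sum_of_injective e he _ _ (hout i) fun _ => rfl

namespace IsTridiagonal

variable {N : ℕ} {A : Matrix (Fin N) (Fin N) R}

theorem submatrix_rev [Zero R] (hA : A.IsTridiagonal) :
    (A.submatrix Fin.rev Fin.rev).IsTridiagonal := fun i j hij =>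
  hA _ _ (by simp only [Fin.val_rev]; omega)

variable [Semiring R] {x : Fin N → R} {lam : R}

theorem mulVec_leading_eq_smul (hA : A.IsTridiagonal) (hx : A *ᵥ x = lam • x) (k : Fin N)
    (hk : x k = 0) :
    A.submatrix (Fin.castLE k.isLt.le) (Fin.castLE k.isLt.le) *ᵥ (x ∘ Fin.castLE k.isLt.le) =
      lam • (x ∘ Fin.castLE k.isLt.le) := by
  rw [submatrix_mulVec_comp_of_injective A x (Fin.castLE_injective _), hx]
  · rfl
  intro i j hj
  have hkj : (k : ℕ) ≤ j := by
    by_contra! h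
    exact hj ⟨⟨j, h⟩, rfl⟩
  obtain hjk | hlt := hkj.eq_or_lt
  · rw [Fin.ext hjk.symm, hk, mul_zero]
  · rw [hA _ _ (Or.inl (by simp only [Fin.val_castLE]; omega)), zero_mul]

theorem mulVec_trailing_eq_smul (hA : A.IsTridiagonal) (hx : A *ᵥ x = lam • x) (k : Fin N)
    (hk : x k = 0) :
    A.submatrix k.trailing k.trailing *ᵥ (x ∘ k.trailing) = lam • (x ∘ k.trailing) := by
  rw [submatrix_mulVec_comp_of_injective A x
    (fun a b h => Fin.ext (by simpa [Fin.trailing] using congrArg Fin.val h)), hx]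
  · rfl
  intro i j hj
  have hjk : (j : ℕ) ≤ k := by
    by_contra! h
    exact hj ⟨⟨j - k - 1, by omega⟩, Fin.ext (by simp only [Fin.trailing]; omega)⟩
  obtain hjk | hlt := hjk.eq_or_lt
  · rw [Fin.ext hjk, hk, mul_zero]
  · rw [hA _ _ (Or.inr (by simp only [Fin.trailing]; omega)), zero_mul]

variable [NoZeroDivisors R]

theorem eq_zero_of_forall_le_eq_zero (hA : A.IsTridiagonal)
    (hsup : ∀ i j : Fin N, (j : ℕ) = (i : ℕ) + 1 → A i j ≠ 0) (hx : A *ᵥ x = lam • x)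
    (k : Fin N) (hk : ∀ j : Fin N, (j : ℕ) ≤ k → x j = 0) : x = 0 := by
  suffices ∀ n : ℕ, (k : ℕ) ≤ n → ∀ j : Fin N, (j : ℕ) ≤ n → x j = 0 from
    funext fun j => this (max k j) (le_max_left _ _) j (le_max_right _ _)
  refine Nat.le_induction hk fun n _ ih j hj => ?_
  obtain hjn | hjn : (j : ℕ) ≤ n ∨ (j : ℕ) = n + 1 := by omega
  · exact ih j hjn
  set m : Fin N := ⟨n, by omega⟩
  have hrow : A m j * x j = lam * x m := by
    have := congrFun hx m
    simp only [mulVec, dotProduct, Pi.smul_apply, smul_eq_mul] at this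
    rw [← this, Fintype.sum_eq_single j]
    intro j' hj'
    obtain hle | hgt : (j' : ℕ) ≤ n ∨ (j : ℕ) + 1 ≤ j' := by omega
    · rw [ih j' hle, mul_zero]
    · rw [hA m j' (Or.inl (by simp [m]; omega)), zero_mul]
  rw [ih m le_rfl, mul_zero] at hrow
  exact (mul_eq_zero.mp hrow).resolve_left (hsup m j hjn)

theorem eq_zero_of_forall_ge_eq_zero (hA : A.IsTridiagonal)
    (hsub : ∀ i j : Fin N, (j : ℕ) = (i : ℕ) + 1 → A j i ≠ 0) (hx : A *ᵥ x = lam • x)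
    (k : Fin N) (hk : ∀ j : Fin N, (k : ℕ) ≤ j → x j = 0) : x = 0 := by
  have hrev : A.submatrix Fin.rev Fin.rev *ᵥ (x ∘ Fin.rev) = lam • (x ∘ Fin.rev) := by
    rw [submatrix_mulVec_comp_of_injective A x Fin.rev_injective
      fun _ j hj => (hj (Fin.rev_surjective j)).elim, hx]
    rfl
  have := (hA.submatrix_rev).eq_zero_of_forall_le_eq_zero
    (fun i j hij => hsub (Fin.rev j) (Fin.rev i) (by simp only [Fin.val_rev]; omega)) hrev
    (Fin.rev k) (fun j hj => hk _ (by simp only [Fin.val_rev] at hj ⊢; omega))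
  funext j
  simpa using congrFun this (Fin.rev j)

end IsTridiagonal

end Matrix

/-- If `A` is tridiagonal with nonzero super- and subdiagonal entries, and for every `k`
the leading principal submatrix `A_{k-1}` (indices `< k`) and the trailing principal
submatrix `Ã_{k+1}` (indices `> k`) have disjoint spectra, then every eigenvector of `A`
has all entries nonzero. -/
theorem stmt_3 (N : ℕ) (A : Matrix (Fin N) (Fin N) ℂ)
    (htri : ∀ i j : Fin N, ((i : ℕ) + 1 < (j : ℕ) ∨ (j : ℕ) + 1 < (i : ℕ)) → A i j = 0)
    (hoff : ∀ i j : Fin N, (j : ℕ) = (i : ℕ) + 1 → A i j ≠ 0 ∧ A j i ≠ 0)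
    (hspec : ∀ k : Fin N, ∀ lam : ℂ,
      ¬ ((∃ v : Fin (k : ℕ) → ℂ, v ≠ 0 ∧
            (Matrix.of fun i j : Fin (k : ℕ) =>
              A (Fin.castLE k.isLt.le i) (Fin.castLE k.isLt.le j)).mulVec v = lam • v) ∧
         (∃ w : Fin (N - (k : ℕ) - 1) → ℂ, w ≠ 0 ∧
            (Matrix.of fun i j : Fin (N - (k : ℕ) - 1) =>
              A ⟨(k : ℕ) + 1 + (i : ℕ), by have := i.isLt; omega⟩
                ⟨(k : ℕ) + 1 + (j : ℕ), by have := j.isLt; omega⟩).mulVec w = lam • w)))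
    (Ξ : Fin N → ℂ) (lam : ℂ) (heig : A.mulVec Ξ = lam • Ξ) (hne : Ξ ≠ 0) :
    ∀ i, Ξ i ≠ 0 := by
  have hA : A.IsTridiagonal := htri
  intro k hk
  have hlead : Ξ ∘ Fin.castLE k.isLt.le ≠ 0 := fun h =>
    hne <| hA.eq_zero_of_forall_le_eq_zero (fun i j hij => (hoff i j hij).1) heig k
      fun j hj => hj.eq_or_lt.elim (fun hjk => Fin.ext hjk ▸ hk)
        fun hjk => congrFun h ⟨j, hjk⟩
  have htrail : Ξ ∘ k.trailing ≠ 0 := fun h =>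
    hne <| hA.eq_zero_of_forall_ge_eq_zero (fun i j hij => (hoff i j hij).2) heig k
      fun j hj => hj.eq_or_lt.elim (fun hjk => Fin.ext hjk.symm ▸ hk)
        fun hjk => (congrArg Ξ (Fin.ext (by simp only [Fin.trailing]; omega))).trans
          (congrFun h ⟨j - k - 1, by omega⟩)
  exact hspec k lam ⟨⟨_, hlead, hA.mulVec_leading_eq_smul heig k hk⟩,
    ⟨_, htrail, hA.mulVec_trailing_eq_smul heig k hk⟩⟩
end

section
/- Let A be a diagonalizable N×N complex matrix with distinct eigenvalues, and suppose every eigenvector of A (equivalently, every row of P⁻¹ in a diagonalization and the corresponding transformed target vector) has all components nonzero with respect to the target vector v_f; i.e., writing A = PDP⁻¹, assume all entries of ṽ_f = P*v_f are nonzero. If v₀ ∈ ℂ^N satisfies (Aⁿ v₀)* v_f = 0 for all n ≥ 0, then v₀ = 0. Consequently, for every v₀ ≠ 0 the solution of dv/dt = Av exits the set {v : v*v_f = 0} in every interval [0,T], T > 0. -/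
open Matrix

theorem key1 (N : ℕ) (A P : Matrix (Fin N) (Fin N) ℂ) (hP : IsUnit P.det)
    (d : Fin N → ℂ) (hd : Function.Injective d)
    (hA : A = P * Matrix.diagonal d * P⁻¹)
    (vf : Fin N → ℂ)
    (hnz : ∀ k, (Pᴴ.mulVec vf) k ≠ 0)
    (v0 : Fin N → ℂ)
    (h : ∀ n : ℕ, dotProduct (star ((A ^ n).mulVec v0)) vf = 0) : v0 = 0 := by
  set w : Fin N → ℂ := P⁻¹.mulVec v0 with hw
  set u : Fin N → ℂ := Pᴴ.mulVec vf with hu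
  set c : Fin N → ℂ := fun k => star (w k) * u k with hc
  set x : Fin N → ℂ := fun k => star (d k) with hx
  have hsum : ∀ n : ℕ, ∑ k, c k * x k ^ n = 0 := by
    intro n
    have hAn' : A ^ n = P * (Matrix.diagonal d) ^ n * P⁻¹ := by
      rw [hA]
      induction n with
      | zero => simp [Matrix.mul_nonsing_inv P hP]
      | succ m ih =>
        rw [pow_succ, pow_succ, ih]
        have : P⁻¹ * (P * Matrix.diagonal d * P⁻¹) = Matrix.diagonal d * P⁻¹ := by
          rw [← Matrix.mul_assoc, ← Matrix.mul_assoc, Matrix.nonsing_inv_mul P hP, Matrix.one_mul]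
        rw [Matrix.mul_assoc (P * Matrix.diagonal d ^ m) P⁻¹, this,
          ← Matrix.mul_assoc, ← Matrix.mul_assoc, Matrix.mul_assoc (P * Matrix.diagonal d ^ m)]
    have hAn : A ^ n = P * Matrix.diagonal (fun k => d k ^ n) * P⁻¹ := by
      rw [hAn', Matrix.diagonal_pow]
      rfl
    have h0 := h n
    rw [hAn] at h0
    have hmv : (P * Matrix.diagonal (fun k => d k ^ n) * P⁻¹).mulVec v0
        = P.mulVec ((Matrix.diagonal (fun k => d k ^ n)).mulVec w) := by
      rw [← Matrix.mulVec_mulVec, ← Matrix.mulVec_mulVec]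
    rw [hmv, Matrix.star_mulVec, ← Matrix.dotProduct_mulVec, ← hu] at h0
    rw [← h0]
    simp [dotProduct, Matrix.mulVec_diagonal, hc, hx, mul_pow]
    ring_nf
    congr 1
    ext k
    ring
  have hcz : c = 0 := by
    have hvand : Matrix.vecMul c (Matrix.vandermonde x) = 0 := by
      ext n
      simp [Matrix.vecMul, dotProduct, Matrix.vandermonde_apply, hsum n]
    have hdet : IsUnit (Matrix.vandermonde x).det := by
      rw [isUnit_iff_ne_zero, Matrix.det_vandermonde_ne_zero_iff]
      intro a b hab
      apply hd
      have : star (x a) = star (x b) := by rw [hab]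
      simpa [hx] using this
    have := congrArg (fun z => Matrix.vecMul z (Matrix.vandermonde x)⁻¹) hvand
    simpa [Matrix.vecMul_vecMul, Matrix.mul_nonsing_inv _ hdet] using this
  have hwz : w = 0 := by
    ext k
    have hck : star (w k) * u k = 0 := by
      have := congrFun hcz k
      simpa [hc] using this
    rcases mul_eq_zero.mp hck with h1 | h2
    · simpa using congrArg star h1
    · exact absurd h2 (hnz k)
  have : P.mulVec w = v0 := by
    rw [hw, Matrix.mulVec_mulVec, Matrix.mul_nonsing_inv P hP, Matrix.one_mulVec]
  rw [hwz] at this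
  simpa using this.symm

theorem key2 (N : ℕ) (A : Matrix (Fin N) (Fin N) ℂ)
    (vf : Fin N → ℂ)
    (key : ∀ v0 : Fin N → ℂ,
        (∀ n : ℕ, dotProduct (star ((A ^ n).mulVec v0)) vf = 0) → v0 = 0)
    (v0 : Fin N → ℂ) (hv0 : v0 ≠ 0) (T : ℝ) (hT : 0 < T)
    (v : ℝ → Fin N → ℂ)
    (hv : ∀ t : ℝ, HasDerivAt v (A.mulVec (v t)) t) (h0 : v 0 = v0) :
    ∃ t ∈ Set.Icc (0 : ℝ) T, dotProduct (star (v t)) vf ≠ 0 := by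
  by_contra hcon
  push_neg at hcon
  -- scalar functions φ n t = (Aⁿ v t) ⬝ᵥ star vf
  set φ : ℕ → ℝ → ℂ := fun n t => dotProduct ((A ^ n).mulVec (v t)) (star vf) with hφ
  have hMv : ∀ (M : Matrix (Fin N) (Fin N) ℂ) (t : ℝ),
      HasDerivAt (fun s => M.mulVec (v s)) (M.mulVec (A.mulVec (v t))) t := by
    intro M t
    rw [hasDerivAt_pi]
    intro i
    simp only [Matrix.mulVec, dotProduct]
    exact HasDerivAt.fun_sum fun j _ => ((hasDerivAt_pi.mp (hv t)) j).const_mul _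
  have hder : ∀ n t, HasDerivAt (φ n) (φ (n + 1) t) t := by
    intro n t
    have h1 : HasDerivAt (φ n)
        (dotProduct ((A ^ n).mulVec (A.mulVec (v t))) (star vf)) t := by
      simp only [hφ, dotProduct]
      exact HasDerivAt.fun_sum fun i _ => ((hasDerivAt_pi.mp (hMv (A ^ n) t)) i).mul_const _
    have h2 : (A ^ n).mulVec (A.mulVec (v t)) = (A ^ (n + 1)).mulVec (v t) := by
      rw [Matrix.mulVec_mulVec, pow_succ]
    rw [h2] at h1
    exact h1
  have hcont : ∀ n, Continuous (φ n) := by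
    intro n
    exact continuous_iff_continuousAt.mpr fun t => (hder n t).continuousAt
  -- φ 0 vanishes on Icc
  have hzero : ∀ n, ∀ t ∈ Set.Icc (0:ℝ) T, φ n t = 0 := by
    intro n
    induction n with
    | zero =>
      intro t ht
      have := hcon t ht
      have h1 : star (dotProduct (star (v t)) vf) = φ 0 t := by
        simp [hφ, dotProduct, Finset.sum_comm, star_sum, mul_comm]
      rw [← h1, this, star_zero]
    | succ m ih =>
      have hIoo : ∀ t ∈ Set.Ioo (0:ℝ) T, φ (m+1) t = 0 := by
        intro t ht
        have hev : φ m =ᶠ[nhds t] (fun _ => (0:ℂ)) := by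
          filter_upwards [Ioo_mem_nhds ht.1 ht.2] with s hs
          exact ih s ⟨le_of_lt hs.1, le_of_lt hs.2⟩
        have h1 : HasDerivAt (φ m) 0 t := by
          have : HasDerivAt (fun _ : ℝ => (0:ℂ)) 0 t := hasDerivAt_const t 0
          exact this.congr_of_eventuallyEq hev
        exact (h1.unique (hder m t)).symm
      -- extend to Icc by continuity
      intro t ht
      have hclos : Set.Icc (0:ℝ) T = closure (Set.Ioo 0 T) := (closure_Ioo hT.ne).symm
      have : Set.EqOn (φ (m+1)) (fun _ => (0:ℂ)) (closure (Set.Ioo 0 T)) :=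
        Set.EqOn.closure (fun s hs => hIoo s hs) (hcont (m+1)) continuous_const
      exact this (hclos ▸ ht)
  have hall : ∀ n : ℕ, dotProduct (star ((A ^ n).mulVec v0)) vf = 0 := by
    intro n
    have h1 := hzero n 0 ⟨le_refl 0, le_of_lt hT⟩
    have h2 : star (φ n 0) = dotProduct (star ((A ^ n).mulVec v0)) vf := by
      simp [hφ, h0, dotProduct, star_sum, mul_comm]
    rw [← h2, h1, star_zero]
  exact hv0 (key v0 hall)

/-- Let `A = P D P⁻¹` be diagonalizable with distinct eigenvalues and suppose all entries
of `ṽ_f = P* v_f` are nonzero.  If `(Aⁿ v₀)* v_f = 0` for all `n ≥ 0` then `v₀ = 0`.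
Consequently, for every `v₀ ≠ 0` any solution of `dv/dt = A v` starting at `v₀` exits the
set `{v : v* v_f = 0}` in every interval `[0, T]`, `T > 0`. -/
theorem stmt_5 (N : ℕ) (A P : Matrix (Fin N) (Fin N) ℂ) (hP : IsUnit P.det)
    (d : Fin N → ℂ) (hd : Function.Injective d)
    (hA : A = P * Matrix.diagonal d * P⁻¹)
    (vf : Fin N → ℂ) (hvf : dotProduct (star vf) vf = 1)
    (hnz : ∀ k, (Pᴴ.mulVec vf) k ≠ 0) :
    (∀ v0 : Fin N → ℂ,
        (∀ n : ℕ, dotProduct (star ((A ^ n).mulVec v0)) vf = 0) → v0 = 0) ∧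
    (∀ v0 : Fin N → ℂ, v0 ≠ 0 → ∀ T : ℝ, 0 < T →
      ∀ v : ℝ → Fin N → ℂ,
        (∀ t : ℝ, HasDerivAt v (A.mulVec (v t)) t) → v 0 = v0 →
        ∃ t ∈ Set.Icc (0 : ℝ) T, dotProduct (star (v t)) vf ≠ 0) := by
  refine ⟨key1 N A P hP d hd hA vf hnz, ?_⟩
  intro v0 hv0 T hT v hv h0
  exact key2 N A vf (key1 N A P hP d hd hA vf hnz) v0 hv0 T hT v hv h0
end
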